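/- Let s ≥ 1, let 1 < i_1 < i_2 < ⋯ < i_s be a strictly increasing sequence of integers all greater than 1, let K = ∏_{k=1}^s (x, y^{i_k}) ⊆ ℂ[x,y], and let n ≥ 1 be a positive integer. Then there is an identity of ideals K · m^n = m^{n+s} ∩ ( x^s, x^{s−i} y^{n + i_1 + ⋯ + i_i} : i = 1, …, s ), where the second ideal on the right is generated by x^s together with the monomials x^{s−i} y^{n + ∑_{k=1}^i i_k} for i = 1,…,s, and ∩ denotes intersection of ideals. -/
import Mathlib

open MvPolynomial Pointwise

/-- The maximal ideal `m = (x, y)` of the origin in `ℂ[x,y]`. -/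
noncomputable def mxy : Ideal (MvPolynomial (Fin 2) ℂ) :=
  Ideal.span {X 0, X 1}

namespace TowerAux

/-- monomial with coefficient 1 -/
noncomputable def M (d : Fin 2 →₀ ℕ) : MvPolynomial (Fin 2) ℂ := monomial d 1

/-- the exponent vector (u, v) -/
noncomputable def V (u v : ℕ) : Fin 2 →₀ ℕ := Finsupp.single 0 u + Finsupp.single 1 v

lemma V_apply0 (u v : ℕ) : V u v 0 = u := by
  simp [V, Finsupp.single_apply]

lemma V_apply1 (u v : ℕ) : V u v 1 = v := by
  simp [V, Finsupp.single_apply]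

lemma eq_V (d : Fin 2 →₀ ℕ) : d = V (d 0) (d 1) := by
  ext a
  fin_cases a
  · simp [V_apply0]
  · simp [V_apply1]

lemma le_iff2 (d d' : Fin 2 →₀ ℕ) : d ≤ d' ↔ d 0 ≤ d' 0 ∧ d 1 ≤ d' 1 := by
  rw [Finsupp.le_def]
  constructor
  · intro h; exact ⟨h 0, h 1⟩
  · rintro ⟨h0, h1⟩ a
    fin_cases a
    · exact h0
    · exact h1

lemma V_le_V {u v u' v' : ℕ} : V u v ≤ V u' v' ↔ u ≤ u' ∧ v ≤ v' := by
  rw [le_iff2]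
  simp [V_apply0, V_apply1]

lemma V_add (u v u' v' : ℕ) : V u v + V u' v' = V (u + u') (v + v') := by
  ext a
  fin_cases a
  · simp [V_apply0]
  · simp [V_apply1]

lemma M_V (u v : ℕ) : M (V u v) = X 0 ^ u * X 1 ^ v := by
  unfold M V
  rw [X_pow_eq_monomial, X_pow_eq_monomial, monomial_mul, one_mul]

lemma mem_spanM {x : MvPolynomial (Fin 2) ℂ} {A : Set (Fin 2 →₀ ℕ)} :
    x ∈ Ideal.span (M '' A) ↔ ∀ xi ∈ x.support, ∃ a ∈ A, a ≤ xi := by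
  unfold M
  exact mem_ideal_span_monomial_image

lemma support_M (a : Fin 2 →₀ ℕ) : (M a).support = {a} := by
  unfold M
  rw [support_monomial]
  simp

lemma dominate_le {A B : Set (Fin 2 →₀ ℕ)} (h : ∀ a ∈ A, ∃ b ∈ B, b ≤ a) :
    Ideal.span (M '' A) ≤ Ideal.span (M '' B) := by
  rw [Ideal.span_le]
  rintro _ ⟨a, ha, rfl⟩
  rw [SetLike.mem_coe, mem_spanM]
  intro xi hxi
  rw [support_M, Finset.mem_singleton] at hxi
  subst hxi
  exact h _ ha

lemma spanM_mul (A B : Set (Fin 2 →₀ ℕ)) :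
    Ideal.span (M '' A) * Ideal.span (M '' B) = Ideal.span (M '' (A + B)) := by
  rw [Ideal.span_mul_span']
  congr 1
  ext f
  constructor
  · rintro ⟨_, ⟨a, ha, rfl⟩, _, ⟨b, hb, rfl⟩, rfl⟩
    refine ⟨a + b, Set.add_mem_add ha hb, ?_⟩
    simp [M, monomial_mul]
  · rintro ⟨_, ⟨a, ha, b, hb, rfl⟩, rfl⟩
    refine ⟨M a, ⟨a, ha, rfl⟩, M b, ⟨b, hb, rfl⟩, ?_⟩
    simp [M, monomial_mul]

/-- exponent vectors of total degree `m` -/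
def S (m : ℕ) : Set (Fin 2 →₀ ℕ) := {d | ∃ u v, u + v = m ∧ d = V u v}

lemma S_add (m k : ℕ) : S m + S k = S (m + k) := by
  ext d
  constructor
  · rintro ⟨a, ⟨u, v, huv, rfl⟩, b, ⟨u', v', huv', rfl⟩, rfl⟩
    exact ⟨u + u', v + v', by omega, V_add u v u' v'⟩
  · rintro ⟨u, v, huv, rfl⟩
    refine ⟨V (min u m) (m - min u m), ⟨_, _, by omega, rfl⟩,
      V (u - min u m) (v - (m - min u m)), ⟨_, _, by omega, rfl⟩, ?_⟩
    show V _ _ + V _ _ = V u v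
    rw [V_add]
    congr 1 <;> omega

lemma mxy_eq : mxy = Ideal.span (M '' S 1) := by
  unfold mxy
  congr 1
  ext f
  constructor
  · rintro (rfl | rfl)
    · exact ⟨V 1 0, ⟨1, 0, rfl, rfl⟩, by rw [M_V]; simp⟩
    · exact ⟨V 0 1, ⟨0, 1, rfl, rfl⟩, by rw [M_V]; simp⟩
  · rintro ⟨_, ⟨u, v, huv, rfl⟩, rfl⟩
    rcases (by omega : u = 1 ∧ v = 0 ∨ u = 0 ∧ v = 1) with ⟨rfl, rfl⟩ | ⟨rfl, rfl⟩
    · left; rw [M_V]; simp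
    · right; rw [M_V]; simp

lemma pow_mxy (m : ℕ) : mxy ^ m = Ideal.span (M '' S m) := by
  induction m with
  | zero =>
    rw [pow_zero, Ideal.one_eq_top, eq_comm, Ideal.eq_top_iff_one]
    apply Ideal.subset_span
    exact ⟨V 0 0, ⟨0, 0, rfl, rfl⟩, by rw [M_V]; simp⟩
  | succ m ih =>
    rw [pow_succ, ih, mxy_eq, spanM_mul, S_add]


section Tower

variable (i : ℕ → ℕ)

/-- partial sums `i 1 + ⋯ + i j` -/
def sg (j : ℕ) : ℕ := ∑ k ∈ Finset.Icc 1 j, i k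

lemma sg_def (j : ℕ) : sg i j = ∑ k ∈ Finset.Icc 1 j, i k := rfl

lemma sg_zero : sg i 0 = 0 := by
  unfold sg
  rw [Finset.Icc_eq_empty (by omega), Finset.sum_empty]

lemma Icc_succ (t : ℕ) : Finset.Icc 1 (t + 1) = insert (t + 1) (Finset.Icc 1 t) := by
  ext x
  simp only [Finset.mem_Icc, Finset.mem_insert]
  omega

lemma sg_succ (j : ℕ) : sg i (j + 1) = sg i j + i (j + 1) := by
  unfold sg
  rw [Icc_succ, Finset.sum_insert (by simp)]
  ring

lemma i_mono (s : ℕ) (hmono : ∀ k, 1 ≤ k → k < s → i k < i (k + 1)) :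
    ∀ a b, 1 ≤ a → a ≤ b → b ≤ s → i a ≤ i b := by
  intro a b ha
  induction b with
  | zero => intro h1 h2; omega
  | succ b ih =>
    intro hab hbs
    rcases eq_or_lt_of_le hab with rfl | h
    · exact le_refl _
    · exact le_trans (ih (by omega) (by omega))
        (le_of_lt (hmono b (by omega) (by omega)))

lemma sg_gap (s : ℕ) (hge : ∀ k, 1 ≤ k → k ≤ s → 1 ≤ i k) :
    ∀ c j, c ≤ j → j ≤ s → sg i c + (j - c) ≤ sg i j := by
  intro c j
  induction j with
  | zero =>
    intro h1 _
    obtain rfl : c = 0 := by omega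
    omega
  | succ j ih =>
    intro hcj hjs
    rcases eq_or_lt_of_le hcj with rfl | h
    · omega
    · have h1 := ih (by omega) (by omega)
      have h2 : 1 ≤ i (j + 1) := hge (j + 1) (by omega) hjs
      rw [sg_succ]
      omega

/-- generator exponents of the tower product -/
def T (s : ℕ) : Set (Fin 2 →₀ ℕ) := {d | ∃ j ≤ s, d = V (s - j) (sg i j)}

lemma prod_tower (s : ℕ) (hmono : ∀ k, 1 ≤ k → k < s → i k < i (k + 1)) :
    ∀ t, t ≤ s →
      (∏ k ∈ Finset.Icc 1 t,
          Ideal.span {(X 0 : MvPolynomial (Fin 2) ℂ), X 1 ^ i k})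
        = Ideal.span (M '' T i t) := by
  intro t
  induction t with
  | zero =>
    intro _
    rw [Finset.Icc_eq_empty (by omega), Finset.prod_empty, Ideal.one_eq_top,
      eq_comm, Ideal.eq_top_iff_one]
    apply Ideal.subset_span
    exact ⟨V 0 0, ⟨0, le_refl 0, by rw [sg_zero]⟩, by rw [M_V]; simp⟩
  | succ t ih =>
    intro hts
    rw [Icc_succ, Finset.prod_insert (by simp), ih (by omega)]
    have hfac : Ideal.span {(X 0 : MvPolynomial (Fin 2) ℂ), X 1 ^ i (t + 1)}
        = Ideal.span (M '' ({V 1 0, V 0 (i (t + 1))} : Set (Fin 2 →₀ ℕ))) := by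
      congr 1
      rw [Set.image_insert_eq, Set.image_singleton, M_V, M_V]
      simp
    rw [hfac, spanM_mul]
    apply le_antisymm
    · apply dominate_le
      rintro g ⟨x, hx, y, ⟨j, hj, rfl⟩, rfl⟩
      rcases hx with rfl | rfl
      · refine ⟨V (t + 1 - j) (sg i j), ⟨j, by omega, rfl⟩, ?_⟩
        show _ ≤ V 1 0 + V (t - j) (sg i j)
        rw [V_add, V_le_V]
        exact ⟨by omega, by omega⟩
      · refine ⟨V (t + 1 - (j + 1)) (sg i (j + 1)), ⟨j + 1, by omega, rfl⟩, ?_⟩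
        show _ ≤ V 0 (i (t + 1)) + V (t - j) (sg i j)
        rw [V_add, V_le_V]
        have hij : i (j + 1) ≤ i (t + 1) :=
          i_mono i s hmono (j + 1) (t + 1) (by omega) (by omega) hts
        rw [sg_succ]
        exact ⟨by omega, by omega⟩
    · apply dominate_le
      rintro g ⟨j, hj, rfl⟩
      by_cases hjt : j ≤ t
      · refine ⟨V 1 0 + V (t - j) (sg i j),
          Set.add_mem_add (Set.mem_insert _ _) ⟨j, hjt, rfl⟩, ?_⟩
        rw [V_add, V_le_V]
        exact ⟨by omega, by omega⟩
      · have hj' : j = t + 1 := by omega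
        subst hj'
        refine ⟨V 0 (i (t + 1)) + V (t - t) (sg i t),
          Set.add_mem_add (Set.mem_insert_of_mem _ rfl) ⟨t, le_refl t, rfl⟩, ?_⟩
        rw [V_add, V_le_V, sg_succ]
        exact ⟨by omega, by omega⟩

/-- generator exponents of the colon-type right ideal -/
def D (s n : ℕ) : Set (Fin 2 →₀ ℕ) :=
  insert (V s 0) {d | ∃ j, 1 ≤ j ∧ j ≤ s ∧ d = V (s - j) (n + sg i j)}

lemma main_eq (s n : ℕ) (hge : ∀ k, 1 ≤ k → k ≤ s → 1 ≤ i k) :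
    Ideal.span (M '' (T i s + S n))
      = Ideal.span (M '' S (n + s)) ⊓ Ideal.span (M '' D i s n) := by
  have hsg : ∀ j, j ≤ s → j ≤ sg i j := by
    intro j hj
    have h := sg_gap i s hge 0 j (Nat.zero_le j) hj
    rw [sg_zero] at h
    omega
  apply le_antisymm
  · apply le_inf
    · apply dominate_le
      rintro g ⟨x, ⟨j, hj, rfl⟩, y, ⟨u, v, huv, rfl⟩, rfl⟩
      have h1 := hsg j hj
      refine ⟨V (min (s - j + u) (n + s)) (n + s - min (s - j + u) (n + s)),
        ⟨_, _, by omega, rfl⟩, ?_⟩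
      show _ ≤ V (s - j) (sg i j) + V u v
      rw [V_add, V_le_V]
      exact ⟨by omega, by omega⟩
    · apply dominate_le
      rintro g ⟨x, ⟨j, hj, rfl⟩, y, ⟨u, v, huv, rfl⟩, rfl⟩
      by_cases hu : j ≤ u
      · refine ⟨V s 0, Set.mem_insert _ _, ?_⟩
        show _ ≤ V (s - j) (sg i j) + V u v
        rw [V_add, V_le_V]
        exact ⟨by omega, Nat.zero_le _⟩
      · have hgap := sg_gap i s hge (j - u) j (by omega) hj
        refine ⟨V (s - (j - u)) (n + sg i (j - u)),
          Set.mem_insert_of_mem _ ⟨j - u, by omega, by omega, rfl⟩, ?_⟩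
        show _ ≤ V (s - j) (sg i j) + V u v
        rw [V_add, V_le_V]
        exact ⟨by omega, by omega⟩
  · intro p hp
    rw [Submodule.mem_inf, mem_spanM, mem_spanM] at hp
    rw [mem_spanM]
    intro xi hxi
    obtain ⟨b, ⟨u, v, huv, rfl⟩, hble⟩ := hp.1 xi hxi
    obtain ⟨c, hc, hcle⟩ := hp.2 xi hxi
    rw [le_iff2, V_apply0, V_apply1] at hble
    simp only [D, Set.mem_insert_iff, Set.mem_setOf_eq] at hc
    rcases hc with rfl | ⟨j, hj1, hjs, rfl⟩
    · rw [le_iff2, V_apply0, V_apply1] at hcle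
      refine ⟨V (s - 0) (sg i 0) + V (min (xi 0 - s) n) (n - min (xi 0 - s) n),
        Set.add_mem_add ⟨0, Nat.zero_le s, rfl⟩ ⟨_, _, by omega, rfl⟩, ?_⟩
      rw [V_add, le_iff2, V_apply0, V_apply1, sg_zero]
      exact ⟨by omega, by omega⟩
    · rw [le_iff2, V_apply0, V_apply1] at hcle
      refine ⟨V (s - j) (sg i j) + V 0 n,
        Set.add_mem_add ⟨j, hjs, rfl⟩ ⟨0, n, by omega, rfl⟩, ?_⟩
      rw [V_add, le_iff2, V_apply0, V_apply1]
      exact ⟨by omega, by omega⟩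

end Tower

end TowerAux


open TowerAux
/-- For a monomial tower `K = ∏_{k=1}^s (x, y^{iₖ})` with `1 < i₁ < ⋯ < i_s` and any `n ≥ 1`,
one has `K·m^n = m^{n+s} ∩ (x^s, x^{s−i} y^{n+i₁+⋯+iᵢ} : 1 ≤ i ≤ s)`. -/
theorem tower_mul_power_of_max_ideal (s : ℕ) (hs : 1 ≤ s) (i : ℕ → ℕ) (hi1 : 1 < i 1)
    (hmono : ∀ k, 1 ≤ k → k < s → i k < i (k + 1)) (n : ℕ) (hn : 1 ≤ n) :
    (∏ k ∈ Finset.Icc 1 s,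
        Ideal.span {(X 0 : MvPolynomial (Fin 2) ℂ), X 1 ^ i k}) * mxy ^ n =
      mxy ^ (n + s) ⊓
        Ideal.span
          (insert ((X 0 : MvPolynomial (Fin 2) ℂ) ^ s)
            {f : MvPolynomial (Fin 2) ℂ | ∃ j, 1 ≤ j ∧ j ≤ s ∧
              f = X 0 ^ (s - j) * X 1 ^ (n + ∑ k ∈ Finset.Icc 1 j, i k)}) := by
  have hge : ∀ k, 1 ≤ k → k ≤ s → 1 ≤ i k := fun k h1 h2 =>
    le_trans (by omega : 1 ≤ i 1) (i_mono i s hmono 1 k le_rfl h1 h2)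
  have hD : (insert ((X 0 : MvPolynomial (Fin 2) ℂ) ^ s)
      {f : MvPolynomial (Fin 2) ℂ | ∃ j, 1 ≤ j ∧ j ≤ s ∧
        f = X 0 ^ (s - j) * X 1 ^ (n + ∑ k ∈ Finset.Icc 1 j, i k)})
      = M '' D i s n := by
    simp only [← sg_def]
    unfold D
    rw [Set.image_insert_eq, M_V, pow_zero, mul_one]
    congr 1
    ext f
    constructor
    · rintro ⟨j, hj1, hjs, rfl⟩
      exact ⟨V (s - j) (n + sg i j), ⟨j, hj1, hjs, rfl⟩, M_V _ _⟩
    · rintro ⟨d, ⟨j, hj1, hjs, rfl⟩, rfl⟩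
      exact ⟨j, hj1, hjs, M_V _ _⟩
  rw [prod_tower i s hmono s le_rfl, pow_mxy, spanM_mul, pow_mxy, hD]
  exact main_eq i s n hge
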